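/- Let A be a locally minimal defensive alliance of the path P_n with v_1 ∉ A and v_n ∉ A. Then every vertex of A has exactly one neighbor in A; that is, deg_A(v) = 1 for all v ∈ A. -/

import Mathlib

/-!
Every vertex of `A` is an interior vertex of the path, so it has two neighbours, and the alliance
condition forces at least one of them into `A`. If both were in `A`, then `A` would contain three
consecutive vertices; as the first vertex is not in `A`, it then contains a run `k ∉ A`,
`k + 1, k + 2, k + 3 ∈ A`. Removing `k + 1` only affects its neighbour `k + 2` inside `A`, whose
other neighbour stays in `A`, so `A ∖ {k + 1}` is still a nonempty defensive alliance, against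
local minimality.
-/

/-- `degIn G X v` is the number of neighbors of `v` lying in the set `X`
(denoted `deg_X(v)` in the paper). -/
noncomputable def degIn {V : Type*} (G : SimpleGraph V) (X : Set V) (v : V) : ℕ :=
  {u | u ∈ X ∧ G.Adj v u}.ncard

/-- `A` is a defensive alliance of `G`: every `v ∈ A` satisfies
`deg_A(v) + 1 ≥ deg_{V∖A}(v)`. -/
def IsDefensiveAlliance {V : Type*} (G : SimpleGraph V) (A : Set V) : Prop :=
  ∀ v ∈ A, degIn G A v + 1 ≥ degIn G Aᶜ v

/-- A nonempty defensive alliance is globally minimal if no nonempty proper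
subset is a defensive alliance. -/
def IsGloballyMinimalDA {V : Type*} (G : SimpleGraph V) (A : Set V) : Prop :=
  A.Nonempty ∧ IsDefensiveAlliance G A ∧
    ∀ B : Set V, B ⊂ A → B.Nonempty → ¬ IsDefensiveAlliance G B

/-- A nonempty defensive alliance is locally minimal if for every `v ∈ A`,
the set `A ∖ {v}` is not a nonempty defensive alliance. -/
def IsLocallyMinimalDA {V : Type*} (G : SimpleGraph V) (A : Set V) : Prop :=
  A.Nonempty ∧ IsDefensiveAlliance G A ∧
    ∀ v ∈ A, ¬ ((A \ {v}).Nonempty ∧ IsDefensiveAlliance G (A \ {v}))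

open SimpleGraph

section DefensiveAlliance

variable {V : Type*} {G : SimpleGraph V}

lemma degIn_eq_ncard_neighborSet_inter (X : Set V) (v : V) :
    degIn G X v = (G.neighborSet v ∩ X).ncard := by
  simp only [degIn, Set.inter_comm (G.neighborSet v)]
  rfl

lemma degIn_congr {X Y : Set V} {v : V} (h : ∀ x, G.Adj v x → (x ∈ X ↔ x ∈ Y)) :
    degIn G X v = degIn G Y v := by
  simp only [degIn_eq_ncard_neighborSet_inter]
  congr 1
  ext x
  exact and_congr_right (h x)

lemma degIn_add_degIn_compl (X : Set V) {v : V} (hv : (G.neighborSet v).Finite) :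
    degIn G X v + degIn G Xᶜ v = (G.neighborSet v).ncard := by
  simp only [degIn_eq_ncard_neighborSet_inter]
  exact Set.ncard_inter_add_ncard_sdiff_eq_ncard _ _ hv

lemma degIn_compl_pos {X : Set V} {v : V} (hv : (G.neighborSet v).Finite)
    (h : ¬ G.neighborSet v ⊆ X) : 0 < degIn G Xᶜ v := by
  rw [degIn_eq_ncard_neighborSet_inter, Set.ncard_pos (hv.subset Set.inter_subset_left)]
  exact Set.not_subset.mp h

/-- Removing `w` only affects its neighbours in `A`; each of those then has exactly one neighbour
outside `A ∖ {w}`, which the alliance condition always tolerates. -/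
theorem IsDefensiveAlliance.diff_singleton {A : Set V} (hA : IsDefensiveAlliance G A) {w : V}
    (hw : ∀ u ∈ A, G.Adj u w → G.neighborSet u ⊆ A) : IsDefensiveAlliance G (A \ {w}) := by
  rintro u ⟨huA, huw⟩
  by_cases hadj : G.Adj u w
  · have hout : degIn G (A \ {w})ᶜ u ≤ 1 := by
      rw [degIn_eq_ncard_neighborSet_inter, ← Set.ncard_singleton w]
      refine Set.ncard_le_ncard (fun x ⟨hx, hxA⟩ => ?_)
      by_contra hxw
      exact hxA ⟨hw u huA hadj hx, hxw⟩
    omega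
  · have hsame : ∀ x, G.Adj u x → (x ∈ A \ {w} ↔ x ∈ A) := fun x hx =>
      ⟨fun h => h.1, fun h => ⟨h, fun hxw => hadj (hxw ▸ hx)⟩⟩
    rw [degIn_congr hsame,
      degIn_congr (X := (A \ {w})ᶜ) (Y := Aᶜ) fun x hx => not_congr (hsame x hx)]
    exact hA u huA

theorem IsLocallyMinimalDA.exists_adj_not_neighborSet_subset {A : Set V}
    (hA : IsLocallyMinimalDA G A) {w : V} (hw : w ∈ A) (hne : (A \ {w}).Nonempty) :
    ∃ u ∈ A, G.Adj u w ∧ ¬ G.neighborSet u ⊆ A := by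
  by_contra! h
  exact hA.2.2 w hw ⟨hne, hA.2.1.diff_singleton h⟩

end DefensiveAlliance

lemma exists_notMem_and_three_consecutive_mem {S : Set ℕ} (h0 : 0 ∉ S) {a : ℕ} (ha : a ∈ S)
    (ha₁ : a + 1 ∈ S) (ha₂ : a + 2 ∈ S) : ∃ k, k ∉ S ∧ k + 1 ∈ S ∧ k + 2 ∈ S ∧ k + 3 ∈ S := by
  obtain ⟨k, hk, hk₁⟩ := Nat.exists_not_and_succ_of_not_zero_of_exists
    (p := fun k => k ∈ S ∧ k + 1 ∈ S ∧ k + 2 ∈ S) (by simp [h0]) ⟨a, ha, ha₁, ha₂⟩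
  exact ⟨k, fun h => hk ⟨h, hk₁.1, hk₁.2.1⟩, hk₁⟩

section PathGraph

variable {n : ℕ}

lemma ncard_neighborSet_pathGraph {v : Fin n} (h₀ : 0 < v.val) (h₁ : v.val + 1 < n) :
    ((pathGraph n).neighborSet v).ncard = 2 := by
  have hN : (pathGraph n).neighborSet v = {⟨v.val - 1, by omega⟩, ⟨v.val + 1, h₁⟩} := by
    ext u
    simp only [mem_neighborSet, pathGraph_adj, Set.mem_insert_iff, Set.mem_singleton_iff,
      Fin.ext_iff]
    omega
  rw [hN, Set.ncard_pair (by simp only [ne_eq, Fin.ext_iff]; omega)]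

theorem IsLocallyMinimalDA.not_run_pathGraph {A : Set (Fin n)}
    (hA : IsLocallyMinimalDA (pathGraph n) A) (k : ℕ) :
    ¬ (k ∉ Fin.val '' A ∧ k + 1 ∈ Fin.val '' A ∧ k + 2 ∈ Fin.val '' A ∧ k + 3 ∈ Fin.val '' A) := by
  rintro ⟨hk, ⟨w, hw, hwk⟩, ⟨y, hy, hyk⟩, ⟨z, hz, hzk⟩⟩
  have hyw : y ∉ ({w} : Set (Fin n)) := by
    simp only [Set.mem_singleton_iff, Fin.ext_iff]
    omega
  obtain ⟨u, huA, hadj, hu⟩ := hA.exists_adj_not_neighborSet_subset hw ⟨y, hy, hyw⟩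
  rw [pathGraph_adj] at hadj
  rcases hadj with hadj | hadj
  · exact hk ⟨u, huA, by omega⟩
  · refine hu fun x hx => ?_
    rw [mem_neighborSet, pathGraph_adj] at hx
    rcases hx with hx | hx
    · rwa [show x = z from Fin.ext (by omega)]
    · rwa [show x = w from Fin.ext (by omega)]

theorem IsLocallyMinimalDA.not_neighborSet_pathGraph_subset {A : Set (Fin n)}
    (hA : IsLocallyMinimalDA (pathGraph n) A) (h0 : 0 ∉ Fin.val '' A) {v : Fin n} (hv : v ∈ A)
    (hvn : v.val + 1 < n) : ¬ (pathGraph n).neighborSet v ⊆ A := by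
  intro hsub
  have hv₀ : v.val ≠ 0 := fun h => h0 ⟨v, hv, h⟩
  have hmem : ∀ j (hj : j < n), (pathGraph n).Adj v ⟨j, hj⟩ → j ∈ Fin.val '' A :=
    fun j hj hadj => ⟨⟨j, hj⟩, hsub hadj, rfl⟩
  obtain ⟨k, hrun⟩ := exists_notMem_and_three_consecutive_mem h0
    (hmem (v.val - 1) (by omega) (by simp only [pathGraph_adj]; omega))
    (by rw [Nat.sub_add_cancel (by omega)]; exact ⟨v, hv, rfl⟩)
    (by rw [show v.val - 1 + 2 = v.val + 1 by omega]; exact hmem _ hvn (by simp [pathGraph_adj]))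
  exact hA.not_run_pathGraph k hrun

end PathGraph

/-- If a locally minimal defensive alliance `A` of the path
`P_n` contains neither endpoint, then every vertex of `A` has exactly one
neighbor in `A`. -/
theorem locallyMinimalDA_path_degree_one (n : ℕ) (hn : 1 ≤ n) (A : Set (Fin n))
    (hA : IsLocallyMinimalDA (SimpleGraph.pathGraph n) A)
    (h1 : (⟨0, by omega⟩ : Fin n) ∉ A) (h2 : (⟨n - 1, by omega⟩ : Fin n) ∉ A) :
    ∀ v ∈ A, degIn (SimpleGraph.pathGraph n) A v = 1 := by
  intro v hv
  have h0 : 0 ∉ Fin.val '' A := by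
    rintro ⟨u, hu, hu0⟩
    exact h1 (Fin.ext (b := ⟨0, by omega⟩) hu0 ▸ hu)
  have hv₀ : 0 < v.val := Nat.pos_of_ne_zero fun h => h0 ⟨v, hv, h⟩
  have hvn : v.val + 1 < n := by
    by_contra hlast
    have hv_last : v = ⟨n - 1, by omega⟩ := Fin.ext (by simp only; omega)
    exact h2 (hv_last ▸ hv)
  have hsplit := degIn_add_degIn_compl A (Set.toFinite ((pathGraph n).neighborSet v))
  rw [ncard_neighborSet_pathGraph hv₀ hvn] at hsplit
  have hout := degIn_compl_pos (Set.toFinite _) (hA.not_neighborSet_pathGraph_subset h0 hv hvn)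
  have halliance := hA.2.1 v hv
  omega
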